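/- The complete bipartite graph K_{3,3} is not Pfaffian. -/

import Mathlib

open scoped Classical

noncomputable instance {α : Type*} (G : SimpleGraph α) : DecidableRel G.Adj :=
  fun _ _ => Classical.propDecidable _

variable {V : Type*}

/-- `m` is a perfect matching of `G`: a fixed-point-free involution matching each
vertex to an adjacent vertex. -/
def IsPerfMatching (G : SimpleGraph V) (m : Equiv.Perm V) : Prop :=
  (∀ v, m v ≠ v) ∧ (∀ v, m (m v) = v) ∧ ∀ v, G.Adj v (m v)

/-- The sign of a list enumerating all elements of `V` exactly once, relative to the
enumeration sorted by the linear order `r` (junk value `1` for other lists). -/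
noncomputable def enumSign [Fintype V] (r : LinearOrder V) (l : List V) : ℤ :=
  letI := r
  if h : l.Nodup ∧ ∀ x, x ∈ l then
    let l₀ := (Finset.univ : Finset V).sort (· ≤ ·)
    let e₀ : Fin l₀.length ≃ V :=
      List.Nodup.getEquivOfForallMemList l₀ (Finset.sort_nodup _ _)
        (fun x => (Finset.mem_sort _).2 (Finset.mem_univ x))
    let e : Fin l.length ≃ V := List.Nodup.getEquivOfForallMemList l h.1 h.2
    have hlen : l₀.length = l.length := by
      simp only [l₀, Finset.length_sort]
      have h2 : l.toFinset = Finset.univ :=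
        Finset.eq_univ_iff_forall.2 fun x => List.mem_toFinset.2 (h.2 x)
      rw [← h2, List.toFinset_card_of_nodup h.1]
    Equiv.Perm.sign (e₀.symm.trans ((finCongr hlen).trans e))
  else 1

/-- The listing `u₁ w₁ u₂ w₂ …` of the edges of the perfect matching `m`, each edge
written according to the orientation `σ` (pairs ordered by their `r`-smaller vertex). -/
noncomputable def matchingList [Fintype V] (r : LinearOrder V) (σ : V → V → ℤ)
    (m : Equiv.Perm V) : List V :=
  letI := r
  ((Finset.univ.filter fun v : V => v < m v).sort (· ≤ ·)).flatMap fun v =>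
    if σ v (m v) = 1 then [v, m v] else [m v, v]

/-- The sign of a perfect matching under the orientation `σ`. -/
noncomputable def matchingSign [Fintype V] (r : LinearOrder V) (σ : V → V → ℤ)
    (m : Equiv.Perm V) : ℤ :=
  enumSign r (matchingList r σ m)

/-- `G` is Pfaffian: some orientation `σ` (a skew sign function, `±1` on edges) gives
all perfect matchings the same sign. -/
def IsPfaffian [Fintype V] (G : SimpleGraph V) : Prop :=
  ∃ σ : V → V → ℤ, (∀ u v, G.Adj u v → σ u v = 1 ∨ σ u v = -1) ∧
    (∀ u v, σ u v = -σ v u) ∧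
    ∀ (r : LinearOrder V) (m₁ m₂ : Equiv.Perm V),
      IsPerfMatching G m₁ → IsPerfMatching G m₂ →
        matchingSign r σ m₁ = matchingSign r σ m₂

/-- `G` is non-Pfaffian, but deleting any edge yields a Pfaffian graph. -/
def MinimalNonPfaffian [Fintype V] (G : SimpleGraph V) : Prop :=
  ¬ IsPfaffian G ∧ ∀ e ∈ G.edgeSet, IsPfaffian (G.deleteEdges {e})

/-- The graph obtained from `G` by contracting the vertex set `S` to a single vertex
(the `Sum.inr` vertex), deleting loops and parallel edges. -/
def contractSet (G : SimpleGraph V) (S : Set V) :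
    SimpleGraph ({x : V // x ∉ S} ⊕ Unit) where
  Adj a b :=
    match a, b with
    | Sum.inl a, Sum.inl b => G.Adj a.1 b.1
    | Sum.inl a, Sum.inr _ => ∃ s ∈ S, G.Adj a.1 s
    | Sum.inr _, Sum.inl b => ∃ s ∈ S, G.Adj s b.1
    | Sum.inr _, Sum.inr _ => False
  symm := by
    refine ⟨?_⟩
    rintro (a | a) (b | b) h
    · exact h.symm
    · obtain ⟨s, hs, ha⟩ := h; exact ⟨s, hs, ha.symm⟩
    · obtain ⟨s, hs, ha⟩ := h; exact ⟨s, hs, ha.symm⟩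
    · exact h.elim
  loopless := by
    refine ⟨?_⟩
    rintro (a | a) h
    · exact G.irrefl h
    · exact h

/-!
Index the perfect matchings of `K_{3,3}` by the permutations `p` of `Fin 3`, the matching of `p`
joining `inl i` to `inr (p i)`. For the lexicographic order on the vertices, the sign of this
matching is `sign p * ∏ i, σ (inl i) (inr (p i))` times a constant independent of `p`:
reversing an edge swaps two adjacent entries of the list, and the list with every edge written
left to right is the image of a fixed list under the permutation `p` of the right side.
If all six signs agreed, the three even products and the negatives of the three odd ones would
all be equal; but every entry `σ (inl i) (inr j)` lies in exactly one even and one odd matching,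
so multiplying them gives `P = -P` for the product `P ≠ 0` of all nine entries.
-/

def IsEnumeration (l : List V) : Prop := l.Nodup ∧ ∀ x, x ∈ l

theorem IsEnumeration.perm {l l' : List V} (h : IsEnumeration l) (hp : l.Perm l') :
    IsEnumeration l' :=
  ⟨hp.nodup_iff.1 h.1, fun x => hp.mem_iff.1 (h.2 x)⟩

theorem IsEnumeration.map {l : List V} (h : IsEnumeration l) (τ : Equiv.Perm V) :
    IsEnumeration (l.map τ) :=
  ⟨h.1.map τ.injective, fun x => List.mem_map.2 ⟨τ.symm x, h.2 _, τ.apply_symm_apply x⟩⟩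

theorem enumSign_map [Fintype V] [DecidableEq V] (r : LinearOrder V) {l : List V}
    (hl : IsEnumeration l) (τ : Equiv.Perm V) :
    enumSign r (l.map τ) = Equiv.Perm.sign τ * enumSign r l := by
  have hτl : IsEnumeration (l.map τ) := hl.map τ
  unfold IsEnumeration at hl hτl
  rw [enumSign, enumSign, dif_pos hτl, dif_pos hl]
  dsimp only
  -- `enumSign` computes signs with the decidable equality carried by `r`
  obtain rfl : ‹DecidableEq V› = r.toDecidableEq := Subsingleton.elim _ _
  rw [← Units.val_mul, ← map_mul]
  congr 2
  ext v
  simp [List.get_eq_getElem]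

theorem enumSign_ne_zero [Fintype V] (r : LinearOrder V) (l : List V) : enumSign r l ≠ 0 := by
  unfold enumSign
  split_ifs <;> simp

theorem enumSign_append_swap [Fintype V] (r : LinearOrder V) {l₁ l₂ : List V} {a b : V}
    (hl : IsEnumeration (l₁ ++ a :: b :: l₂)) :
    enumSign r (l₁ ++ b :: a :: l₂) = -enumSign r (l₁ ++ a :: b :: l₂) := by
  have hnd := hl.1
  simp only [List.nodup_append, List.nodup_cons, List.mem_cons, not_or] at hnd
  obtain ⟨hl₁, ⟨⟨hab, ha₂⟩, hb₂, hl₂⟩, hdisj⟩ := hnd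
  have hfix : ∀ x ∈ l₁ ++ l₂, Equiv.swap a b x = x := fun x hx =>
    Equiv.swap_apply_of_ne_of_ne (by grind) (by grind)
  have hmap : (l₁ ++ a :: b :: l₂).map (Equiv.swap a b) = l₁ ++ b :: a :: l₂ := by
    simp only [List.map_append, List.map_cons, Equiv.swap_apply_left, Equiv.swap_apply_right]
    rw [List.map_congr_left (fun x hx => hfix x (by simp [hx])),
      List.map_congr_left (fun x hx => hfix x (by simp [hx]))]
    simp
  rw [← hmap, enumSign_map r hl, Equiv.Perm.sign_swap hab]
  simp

theorem enumSign_append_flatMap_orient [Fintype V] {α : Type*} (r : LinearOrder V)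
    (a b : α → V) (s : α → ℤ) (l₁ : List V) (is : List α)
    (hs : ∀ i ∈ is, s i = 1 ∨ s i = -1)
    (hl : IsEnumeration (l₁ ++ is.flatMap fun i => [a i, b i])) :
    enumSign r (l₁ ++ is.flatMap fun i => if s i = 1 then [a i, b i] else [b i, a i]) =
      (is.map s).prod * enumSign r (l₁ ++ is.flatMap fun i => [a i, b i]) := by
  induction is generalizing l₁ with
  | nil => simp
  | cons i is ih =>
    simp only [List.flatMap_cons, List.map_cons, List.prod_cons] at hl ⊢
    have ih' := ih (l₁ ++ [a i, b i]) (fun j hj => hs j (List.mem_cons_of_mem i hj))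
      (by simpa using hl)
    simp only [List.append_assoc, List.cons_append, List.nil_append] at ih' hl
    rcases hs i List.mem_cons_self with h | h
    · simpa [h] using ih'
    · have horient : (is.flatMap fun i => [a i, b i]).Perm
          (is.flatMap fun i => if s i = 1 then [a i, b i] else [b i, a i]) :=
        List.Perm.flatMap_left _ fun j _ => by
          split_ifs
          exacts [List.Perm.refl _, List.Perm.swap _ _ _]
      have hl' := hl.perm ((horient.cons _).cons _ |>.append_left l₁)
      rw [h, if_neg (by decide), List.cons_append, List.cons_append, List.nil_append,
        enumSign_append_swap r hl', ih']
      simp only [List.cons_append, List.nil_append]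
      ring

theorem matchingList_eq_flatMap [Fintype V] (r : LinearOrder V) (σ : V → V → ℤ)
    (m : Equiv.Perm V) {l : List V} (hl : l.Pairwise r.lt)
    (hmem : ∀ v, v ∈ l ↔ r.lt v (m v)) :
    matchingList r σ m = l.flatMap fun v => if σ v (m v) = 1 then [v, m v] else [m v, v] := by
  let _ := r
  have hnd : l.Nodup := hl.imp ne_of_lt
  have hfin : (Finset.univ.filter fun v => v < m v) = l.toFinset := by
    ext v
    simpa using (hmem v).symm
  rw [matchingList, hfin, (List.toFinset_sort _ hnd).2 (hl.imp le_of_lt)]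

section Bipartite

variable {α : Type*}

open Sum

abbrev sumLexOrder (α β : Type*) [LinearOrder α] [LinearOrder β] : LinearOrder (α ⊕ β) :=
  LinearOrder.lift' toLex toLex.injective

def bipartiteMatching (p : Equiv.Perm α) : Equiv.Perm (α ⊕ α) :=
  (Equiv.sumCongr p p.symm).trans (Equiv.sumComm α α)

@[simp]
theorem bipartiteMatching_inl (p : Equiv.Perm α) (i : α) :
    bipartiteMatching p (inl i) = inr (p i) := rfl

@[simp]
theorem bipartiteMatching_inr (p : Equiv.Perm α) (j : α) :
    bipartiteMatching p (inr j) = inl (p.symm j) := rfl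

theorem isPerfMatching_bipartiteMatching (p : Equiv.Perm α) :
    IsPerfMatching (completeBipartiteGraph α α) (bipartiteMatching p) := by
  refine ⟨?_, ?_, ?_⟩ <;> rintro (i | j) <;> simp

variable [Fintype α] [LinearOrder α]

theorem matchingList_bipartiteMatching (σ : α ⊕ α → α ⊕ α → ℤ) (p : Equiv.Perm α) :
    matchingList (sumLexOrder α α) σ (bipartiteMatching p) =
      (Finset.univ : Finset α).sort.flatMap fun i =>
        if σ (inl i) (inr (p i)) = 1 then [inl i, inr (p i)] else [inr (p i), inl i] := by
  rw [matchingList_eq_flatMap _ σ _ (l := (Finset.univ : Finset α).sort.map inl),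
    List.flatMap_map]
  · rfl
  · exact List.pairwise_map.2 ((Finset.univ.sortedLT_sort).pairwise.imp Sum.Lex.inl_lt_inl_iff.2)
  · rintro (i | j)
    · exact iff_of_true (by simp) (Sum.Lex.inl_lt_inr i _)
    · exact iff_of_false (by simp) Sum.Lex.not_inr_lt_inl

theorem isEnumeration_flatMap_sort :
    IsEnumeration ((Finset.univ : Finset α).sort.flatMap fun i => [inl i, inr i]) := by
  refine ⟨List.nodup_flatMap.2 ⟨fun i _ => by simp, ?_⟩, ?_⟩
  · exact (Finset.univ.sort_nodup _).pairwise_of_forall_ne fun i _ j _ hij => by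
      simpa using hij.symm
  · rintro (i | i) <;> simp

theorem matchingSign_bipartiteMatching (σ : α ⊕ α → α ⊕ α → ℤ)
    (hσ : ∀ i j, σ (inl i) (inr j) = 1 ∨ σ (inl i) (inr j) = -1) (p : Equiv.Perm α) :
    matchingSign (sumLexOrder α α) σ (bipartiteMatching p) =
      Equiv.Perm.sign p * (∏ i, σ (inl i) (inr (p i))) *
        enumSign (sumLexOrder α α)
          ((Finset.univ : Finset α).sort.flatMap fun i => [inl i, inr i]) := by
  have hmap : ((Finset.univ : Finset α).sort.flatMap fun i => [inl i, inr (p i)]) =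
      ((Finset.univ : Finset α).sort.flatMap fun i => [inl i, inr i]).map
        (Equiv.Perm.sumCongr 1 p) := by
    simp [List.map_flatMap]
  have horient := enumSign_append_flatMap_orient (sumLexOrder α α) (fun i => inl i)
    (fun i => inr (p i)) (fun i => σ (inl i) (inr (p i))) [] _ (fun i _ => hσ i (p i))
    (by rw [List.nil_append, hmap]; exact isEnumeration_flatMap_sort.map _)
  rw [List.nil_append, List.nil_append] at horient
  rw [matchingSign, matchingList_bipartiteMatching, horient, hmap,
    enumSign_map _ isEnumeration_flatMap_sort, Equiv.Perm.sign_sumCongr,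
    (Finset.univ.sort_perm_toList _).map _ |>.prod_eq, Finset.prod_map_toList]
  simp only [Equiv.Perm.sign_one, one_mul]
  ring

end Bipartite

open Equiv in
theorem not_forall_sign_smul_prod_eq_fin_three {R : Type*} [CommRing R] [IsDomain R] [CharZero R]
    (x : Fin 3 → Fin 3 → R) (hx : ∀ i j, x i j ≠ 0) :
    ¬ ∀ p : Perm (Fin 3), Perm.sign p • ∏ i, x i (p i) = ∏ i, x i i := by
  intro h
  have e1 := h (swap 0 1 * swap 1 2)
  have e2 := h (swap 1 2 * swap 0 1)
  have o1 := h (swap 0 1)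
  have o2 := h (swap 0 2)
  have o3 := h (swap 1 2)
  simp only [Fin.prod_univ_three, Units.smul_def, Perm.sign_mul, Perm.sign_swap', Perm.coe_mul,
    Function.comp_apply, swap_apply_of_ne_of_ne, swap_apply_left, swap_apply_right, ne_eq,
    Fin.reduceEq, not_false_eq_true, ↓reduceIte, Units.val_neg, Units.val_one, mul_neg, mul_one,
    neg_neg, one_smul, neg_smul] at e1 e2 o1 o2 o3
  set t := x 0 0 * x 1 1 * x 2 2
  have htwice : 2 * (t * (x 0 1 * x 1 2 * x 2 0) * (x 0 2 * x 1 0 * x 2 1)) = 0 := by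
    linear_combination t * (x 0 2 * x 1 0 * x 2 1) * e1 + t ^ 2 * e2
      - (x 0 2 * x 1 1 * x 2 0) * (x 0 0 * x 1 2 * x 2 1) * o1
      + t * (x 0 0 * x 1 2 * x 2 1) * o2 - t ^ 2 * o3
  simp [t, hx] at htwice

/-- The complete bipartite graph `K_{3,3}` is not Pfaffian. -/
theorem stmt12 : ¬ IsPfaffian (completeBipartiteGraph (Fin 3) (Fin 3)) := by
  rintro ⟨σ, hσ, -, hsame⟩
  have hσ' : ∀ i j, σ (Sum.inl i) (Sum.inr j) = 1 ∨ σ (Sum.inl i) (Sum.inr j) = -1 :=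
    fun i j => hσ _ _ (by simp)
  refine not_forall_sign_smul_prod_eq_fin_three (fun i j => σ (Sum.inl i) (Sum.inr j))
    (fun i j => by rcases hσ' i j with h | h <;> simp [h]) fun p => ?_
  have h := hsame (sumLexOrder _ _) _ _ (isPerfMatching_bipartiteMatching p)
    (isPerfMatching_bipartiteMatching 1)
  rw [matchingSign_bipartiteMatching σ hσ', matchingSign_bipartiteMatching σ hσ'] at h
  simpa [Units.smul_def, enumSign_ne_zero] using h
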